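/- (Lemma 2(a) of the paper.) Let n ≥ 3 and let H(A,B) := (n − 1)(2 − n) det(A) ω²(A,B) be the reduced SGFT Lagrangian density. At any pair (A, B) with A invertible which is semi-symmetric (i.e. Γ^α_{μν} − Γ^α_{νμ} = δ^α_μ ω_ν − δ^α_ν ω_μ, where Γ^α_{μν} := Σ_i λ_i^α B_{iμν}), the partial derivative of H with respect to A_{iβ}, holding B fixed, equals (n − 2) det(A) [ 2(n − 2) (Σ_α λ_i^α ω_α) ω^β − (n − 3) λ_i^β ω² ]. -/

import Mathlib

/-!
The Lagrangian depends on `A` only through `det A` and `λ = A⁻¹`: since `g⁻¹ = λ λᵀ`, we have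
`ω² = Σ_j θ_j²` with `θ_j = Σ_α λ_j^α ω_α` the frame components of `ω`, and `ω^β = Σ_j λ_j^β θ_j`.
Along the line `A + t E_{iβ}` the determinant is affine with slope `det A · λ_i^β`, and
`dλ_j^α = -λ_i^α λ_j^β`. Semi-symmetry turns the resulting variation of `ω_μ` into
`-(δ^β_μ θ_i - λ_i^β ω_μ) / (1 - n)`, hence `dθ_j = -λ_j^β θ_i - (λ_j^β θ_i - λ_i^β θ_j) / (1 - n)`,
and the product rule gives the formula. As `H` is differentiable wherever `A` is invertible, this
directional derivative is the value of the Fréchet derivative on `(E_{iβ}, 0)`.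
-/

open scoped BigOperators

/-- The inverse-frame components λ_i^α of a frame matrix `A` (so that
Σ_i λ_i^α A_{iν} = δ^α_ν when `A` is invertible). -/
noncomputable def lamUp {n : ℕ} (A : Fin n → Fin n → ℝ) (i α : Fin n) : ℝ :=
  (Matrix.of A)⁻¹ α i

/-- The metric g_{μν} = Σ_i A_{iμ} A_{iν} built from the frame matrix `A`. -/
noncomputable def gOf {n : ℕ} (A : Fin n → Fin n → ℝ) : Matrix (Fin n) (Fin n) ℝ :=
  Matrix.of fun μ ν => ∑ i, A i μ * A i ν

/-- ω_μ(A,B) = (1/(1−n)) Σ_{i,α} λ_i^α (B_{iμα} − B_{iαμ}), with the frame values `A`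
and the frame-derivative values `B` treated as independent variables. -/
noncomputable def omegaOf {n : ℕ}
    (p : (Fin n → Fin n → ℝ) × (Fin n → Fin n → Fin n → ℝ)) (μ : Fin n) : ℝ :=
  (1 / (1 - (n : ℝ))) * ∑ i, ∑ α, lamUp p.1 i α * (p.2 i μ α - p.2 i α μ)

/-- ω^β(A,B) = Σ_α g^{βα} ω_α. -/
noncomputable def omegaUpOf {n : ℕ}
    (p : (Fin n → Fin n → ℝ) × (Fin n → Fin n → Fin n → ℝ)) (β : Fin n) : ℝ :=
  ∑ α, (gOf p.1)⁻¹ β α * omegaOf p α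

/-- ω²(A,B) = Σ_{μ,ν} g^{μν} ω_μ ω_ν. -/
noncomputable def omegaSqOf {n : ℕ}
    (p : (Fin n → Fin n → ℝ) × (Fin n → Fin n → Fin n → ℝ)) : ℝ :=
  ∑ μ, ∑ ν, (gOf p.1)⁻¹ μ ν * omegaOf p μ * omegaOf p ν

/-- The connection values Γ^α_{μν}(A,B) = Σ_i λ_i^α B_{iμν}. -/
noncomputable def GammaOf {n : ℕ}
    (p : (Fin n → Fin n → ℝ) × (Fin n → Fin n → Fin n → ℝ)) (α μ ν : Fin n) : ℝ :=
  ∑ i, lamUp p.1 i α * p.2 i μ ν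

/-- The reduced SGFT Lagrangian density H(A,B) = (n − 1)(2 − n) det(A) ω²(A,B). -/
noncomputable def HOf {n : ℕ}
    (p : (Fin n → Fin n → ℝ) × (Fin n → Fin n → Fin n → ℝ)) : ℝ :=
  ((n : ℝ) - 1) * (2 - (n : ℝ)) * (Matrix.of p.1).det * omegaSqOf p

open Matrix

theorem Matrix.det_add_smul_single {ι R : Type*} [Fintype ι] [DecidableEq ι] [CommRing R]
    (M : Matrix ι ι R) (i j : ι) (t : R) :
    (M + t • single i j 1).det = M.det + t * M.adjugate j i := by
  have hrow : M + t • single i j 1 = M.updateRow i (M i + t • Pi.single j 1) := by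
    ext a b
    by_cases ha : a = i
    · subst ha
      simp [single_apply, Pi.single_apply, eq_comm]
    · simp [ha, Ne.symm ha]
  rw [hrow, det_updateRow_add, det_updateRow_smul, updateRow_eq_self, adjugate_apply]

theorem Matrix.mul_single_mul_apply {ι R : Type*} [Fintype ι] [DecidableEq ι] [CommRing R]
    (M N : Matrix ι ι R) (i j a b : ι) (c : R) :
    (M * single i j c * N) a b = M a i * c * N j b := by
  simp [mul_apply, single_apply, ite_and, Finset.sum_ite_eq]

section MatrixCalculus

variable {𝕜 X ι : Type*} [NontriviallyNormedField 𝕜] [NormedAddCommGroup X] [NormedSpace 𝕜 X]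
  [Fintype ι] [DecidableEq ι]

theorem HasDerivAt.matrix_mul_apply {l m o : Type*} [Fintype m] {M : 𝕜 → Matrix l m 𝕜}
    {N : 𝕜 → Matrix m o 𝕜} {M' : Matrix l m 𝕜} {N' : Matrix m o 𝕜} {t : 𝕜}
    (hM : ∀ a b, HasDerivAt (fun s => M s a b) (M' a b) t)
    (hN : ∀ a b, HasDerivAt (fun s => N s a b) (N' a b) t) (a : l) (b : o) :
    HasDerivAt (fun s => (M s * N s) a b) ((M' * N t + M t * N') a b) t := by
  simp only [mul_apply, Matrix.add_apply, ← Finset.sum_add_distrib]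
  exact HasDerivAt.fun_sum fun k _ => (hM a k).fun_mul (hN k b)

theorem DifferentiableAt.matrix_det {M : X → Matrix ι ι 𝕜} {x : X}
    (hM : ∀ a b, DifferentiableAt 𝕜 (fun y => M y a b) x) :
    DifferentiableAt 𝕜 (fun y => (M y).det) x := by
  simp only [det_apply']
  fun_prop

theorem DifferentiableAt.matrix_inv_apply {M : X → Matrix ι ι 𝕜} {x : X}
    (hM : ∀ a b, DifferentiableAt 𝕜 (fun y => M y a b) x) (hx : IsUnit (M x).det) (a b : ι) :
    DifferentiableAt 𝕜 (fun y => (M y)⁻¹ a b) x := by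
  simp only [inv_def, Ring.inverse_eq_inv', Matrix.smul_apply, smul_eq_mul, adjugate_apply]
  refine ((DifferentiableAt.matrix_det hM).inv hx.ne_zero).mul
    (DifferentiableAt.matrix_det fun c d => ?_)
  by_cases h : c = b
  · simp [h]
  · simp [h, hM c d]

theorem HasDerivAt.matrix_inv_apply {N : 𝕜 → Matrix ι ι 𝕜} {N' : Matrix ι ι 𝕜} {t : 𝕜}
    (hN : ∀ a b, HasDerivAt (fun s => N s a b) (N' a b) t) (ht : IsUnit (N t).det) (a b : ι) :
    HasDerivAt (fun s => (N s)⁻¹ a b) (-((N t)⁻¹ * N' * (N t)⁻¹) a b) t := by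
  set D : Matrix ι ι 𝕜 := of fun a b => _root_.deriv (fun s => (N s)⁻¹ a b) t
  have hD : ∀ a b, HasDerivAt (fun s => (N s)⁻¹ a b) (D a b) t := fun a b =>
    (DifferentiableAt.matrix_inv_apply (fun c d => (hN c d).differentiableAt) ht a b).hasDerivAt
  have hunit : ∀ᶠ s in nhds t, IsUnit (N s).det :=
    ((DifferentiableAt.matrix_det fun c d => (hN c d).differentiableAt).continuousAt.eventually_ne
      ht.ne_zero).mono fun s hs => hs.isUnit
  -- differentiate `(N s)⁻¹ * N s = 1`
  have hprod : D * N t + (N t)⁻¹ * N' = 0 := by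
    ext c d
    refine (HasDerivAt.matrix_mul_apply hD hN c d).unique
      ((hasDerivAt_const t ((1 : Matrix ι ι 𝕜) c d)).congr_of_eventuallyEq ?_)
    filter_upwards [hunit] with s hs
    rw [nonsing_inv_mul _ hs]
  have hDeq : D = -((N t)⁻¹ * N' * (N t)⁻¹) := by
    rw [← mul_nonsing_inv_cancel_right _ D ht, eq_neg_of_add_eq_zero_left hprod, Matrix.neg_mul]
  simpa [hDeq] using hD a b

end MatrixCalculus

abbrev FrameData (n : ℕ) := (Fin n → Fin n → ℝ) × (Fin n → Fin n → Fin n → ℝ)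

def IsSemiSymmetric {n : ℕ} (p : FrameData n) : Prop :=
  ∀ α μ ν, GammaOf p α μ ν - GammaOf p α ν μ
    = (if α = μ then omegaOf p ν else 0) - (if α = ν then omegaOf p μ else 0)

noncomputable def omegaFrameOf {n : ℕ} (p : FrameData n) (j : Fin n) : ℝ :=
  ∑ α, lamUp p.1 j α * omegaOf p α

def elemMatrix {n : ℕ} (i β : Fin n) : Fin n → Fin n → ℝ :=
  fun i' β' => if i' = i ∧ β' = β then 1 else 0

section FrameIdentities

variable {n : ℕ}

lemma gOf_eq (A : Fin n → Fin n → ℝ) : gOf A = (of A)ᵀ * of A := by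
  ext μ ν
  simp [gOf, mul_apply]

lemma inv_gOf (A : Fin n → Fin n → ℝ) : (gOf A)⁻¹ = (of A)⁻¹ * ((of A)⁻¹)ᵀ := by
  rw [gOf_eq, Matrix.mul_inv_rev, transpose_nonsing_inv]

lemma omegaSqOf_eq_sum_sq (p : FrameData n) : omegaSqOf p = ∑ j, omegaFrameOf p j ^ 2 := by
  simp only [omegaSqOf, omegaFrameOf, inv_gOf, mul_apply, transpose_apply, lamUp, sq,
    Finset.sum_mul, Finset.mul_sum]
  calc _ = ∑ μ, ∑ j, ∑ ν, (of p.1)⁻¹ μ j * (of p.1)⁻¹ ν j * omegaOf p μ * omegaOf p ν :=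
        Finset.sum_congr rfl fun _ _ => Finset.sum_comm
    _ = _ := by
      rw [Finset.sum_comm]
      exact Finset.sum_congr rfl fun _ _ => Finset.sum_congr rfl fun _ _ =>
        Finset.sum_congr rfl fun _ _ => by ring

lemma omegaUpOf_eq_sum (p : FrameData n) (β : Fin n) :
    omegaUpOf p β = ∑ j, lamUp p.1 j β * omegaFrameOf p j := by
  simp only [omegaUpOf, omegaFrameOf, inv_gOf, mul_apply, transpose_apply, lamUp, Finset.sum_mul,
    Finset.mul_sum]
  rw [Finset.sum_comm]
  exact Finset.sum_congr rfl fun _ _ => Finset.sum_congr rfl fun _ _ => by ring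

lemma of_add_smul_elemMatrix (A : Fin n → Fin n → ℝ) (i β : Fin n) (t : ℝ) :
    of (A + t • elemMatrix i β) = of A + t • single i β 1 := by
  ext a b
  simp [elemMatrix, single_apply, eq_comm]

end FrameIdentities

section Variation

variable {n : ℕ} {A : Fin n → Fin n → ℝ} {B : Fin n → Fin n → Fin n → ℝ} (i β : Fin n)

lemma differentiableAt_lamUp (hA : IsUnit (of A).det) (j α : Fin n) :
    DifferentiableAt ℝ (fun A' : Fin n → Fin n → ℝ => lamUp A' j α) A :=
  DifferentiableAt.matrix_inv_apply (M := fun A' => of A')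
    (fun a b => show DifferentiableAt ℝ (fun A' : Fin n → Fin n → ℝ => A' a b) A by fun_prop) hA α j

lemma differentiableAt_HOf (hA : IsUnit (of A).det) :
    DifferentiableAt ℝ (fun p : FrameData n => HOf p) (A, B) := by
  have hlam : ∀ j α, DifferentiableAt ℝ (fun p : FrameData n => lamUp p.1 j α) (A, B) :=
    fun j α => DifferentiableAt.fun_comp' (f := Prod.fst) (A, B) (differentiableAt_lamUp hA j α)
      differentiableAt_fst
  have hdet : DifferentiableAt ℝ (fun p : FrameData n => (of p.1).det) (A, B) :=
    DifferentiableAt.matrix_det fun a b =>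
      show DifferentiableAt ℝ (fun p : FrameData n => p.1 a b) (A, B) by fun_prop
  simp only [HOf, omegaSqOf_eq_sum_sq, omegaFrameOf, omegaOf]
  fun_prop

lemma hasDerivAt_det_line (hA : IsUnit (of A).det) :
    HasDerivAt (fun t : ℝ => (of (A + t • elemMatrix i β)).det) ((of A).det * lamUp A i β) 0 := by
  have hadj : (of A).adjugate β i = (of A).det * lamUp A i β := by
    rw [lamUp, inv_def, Matrix.smul_apply, Ring.inverse_eq_inv', smul_eq_mul,
      mul_inv_cancel_left₀ hA.ne_zero]
  simp only [of_add_smul_elemMatrix, det_add_smul_single, hadj]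
  simpa using ((hasDerivAt_id (0 : ℝ)).mul_const ((of A).det * lamUp A i β)).const_add (of A).det

lemma hasDerivAt_lamUp_line (hA : IsUnit (of A).det) (j α : Fin n) :
    HasDerivAt (fun t : ℝ => lamUp (A + t • elemMatrix i β) j α)
      (-(lamUp A i α * lamUp A j β)) 0 := by
  have hline : ∀ a b, HasDerivAt (fun t : ℝ => (of A + t • single i β (1 : ℝ)) a b)
      (single i β (1 : ℝ) a b) 0 := fun a b => by
    simpa only [Matrix.add_apply, Matrix.smul_apply, of_apply, smul_eq_mul, id, one_mul] using
      ((hasDerivAt_id (0 : ℝ)).mul_const (single i β (1 : ℝ) a b)).const_add (A a b)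
  simpa [lamUp, of_add_smul_elemMatrix, mul_single_mul_apply] using
    HasDerivAt.matrix_inv_apply hline (by simpa using hA) α j

lemma sum_lamUp_mul_sub_eq_of_isSemiSymmetric (hss : IsSemiSymmetric (A, B)) (μ : Fin n) :
    ∑ j, ∑ α, lamUp A i α * lamUp A j β * (B j μ α - B j α μ)
      = (if β = μ then omegaFrameOf (A, B) i else 0) - lamUp A i β * omegaOf (A, B) μ := by
  calc _ = ∑ α, lamUp A i α * (GammaOf (A, B) β μ α - GammaOf (A, B) β α μ) := by
        rw [Finset.sum_comm]
        simp only [GammaOf, ← Finset.sum_sub_distrib, Finset.mul_sum, mul_sub, mul_assoc]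
    _ = _ := by
        simp only [hss β, mul_sub, mul_ite, mul_zero, Finset.sum_sub_distrib, Finset.sum_ite_eq,
          Finset.mem_univ, if_true, omegaFrameOf]
        split_ifs <;> simp

lemma hasDerivAt_omegaOf_line (hA : IsUnit (of A).det) (hss : IsSemiSymmetric (A, B))
    (μ : Fin n) :
    HasDerivAt (fun t : ℝ => omegaOf (A + t • elemMatrix i β, B) μ)
      (-(1 / (1 - (n : ℝ))) * ((if β = μ then omegaFrameOf (A, B) i else 0)
        - lamUp A i β * omegaOf (A, B) μ)) 0 := by
  rw [← sum_lamUp_mul_sub_eq_of_isSemiSymmetric i β hss]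
  refine ((HasDerivAt.fun_sum (u := Finset.univ) fun j _ =>
    HasDerivAt.fun_sum (u := Finset.univ) fun α _ =>
      (hasDerivAt_lamUp_line i β hA j α).mul_const (B j μ α - B j α μ)).const_mul
        (1 / (1 - (n : ℝ)))).congr_deriv ?_
  simp only [neg_mul, Finset.sum_neg_distrib, mul_neg]

lemma hasDerivAt_omegaFrameOf_line (hA : IsUnit (of A).det) (hss : IsSemiSymmetric (A, B))
    (j : Fin n) :
    HasDerivAt (fun t : ℝ => omegaFrameOf (A + t • elemMatrix i β, B) j)
      (-(lamUp A j β * omegaFrameOf (A, B) i) - 1 / (1 - (n : ℝ)) *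
        (lamUp A j β * omegaFrameOf (A, B) i - lamUp A i β * omegaFrameOf (A, B) j)) 0 := by
  refine (HasDerivAt.fun_sum (u := Finset.univ) fun μ _ =>
    (hasDerivAt_lamUp_line i β hA j μ).fun_mul
      (hasDerivAt_omegaOf_line i β hA hss μ)).congr_deriv ?_
  simp only [zero_smul, add_zero, Finset.sum_add_distrib, omegaFrameOf, mul_sub, mul_ite, mul_zero,
    Finset.sum_sub_distrib, Finset.sum_ite_eq, Finset.mem_univ, if_true, Finset.mul_sum]
  simp only [← Finset.sum_sub_distrib, ← Finset.sum_add_distrib, ← Finset.sum_neg_distrib]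
  exact Finset.sum_congr rfl fun _ _ => by ring

lemma hasDerivAt_sum_omegaFrameOf_sq_line (hA : IsUnit (of A).det)
    (hss : IsSemiSymmetric (A, B)) :
    HasDerivAt (fun t : ℝ => ∑ j, omegaFrameOf (A + t • elemMatrix i β, B) j ^ 2)
      (2 * (1 / (1 - (n : ℝ)) * lamUp A i β * omegaSqOf (A, B)
        - (1 + 1 / (1 - (n : ℝ))) * omegaFrameOf (A, B) i * omegaUpOf (A, B) β)) 0 := by
  refine (HasDerivAt.fun_sum (u := Finset.univ) fun j _ =>
    (hasDerivAt_omegaFrameOf_line i β hA hss j).pow 2).congr_deriv ?_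
  rw [omegaSqOf_eq_sum_sq, omegaUpOf_eq_sum, Finset.mul_sum, Finset.mul_sum,
    ← Finset.sum_sub_distrib, Finset.mul_sum]
  refine Finset.sum_congr rfl fun j _ => ?_
  simp only [zero_smul, add_zero]
  ring

lemma hasLineDerivAt_HOf (hn : (n : ℝ) ≠ 1) (hA : IsUnit (of A).det)
    (hss : IsSemiSymmetric (A, B)) :
    HasLineDerivAt ℝ (fun p : FrameData n => HOf p)
      (((n : ℝ) - 2) * (of A).det *
        (2 * ((n : ℝ) - 2) * omegaFrameOf (A, B) i * omegaUpOf (A, B) β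
          - ((n : ℝ) - 3) * lamUp A i β * omegaSqOf (A, B))) (A, B) (elemMatrix i β, 0) := by
  have hline : ∀ t : ℝ,
      (A, B) + t • ((elemMatrix i β, 0) : FrameData n) = (A + t • elemMatrix i β, B) := by
    intro t
    simp
  simp only [HasLineDerivAt, hline, HOf, omegaSqOf_eq_sum_sq]
  refine (((hasDerivAt_det_line i β hA).const_mul (((n : ℝ) - 1) * (2 - (n : ℝ)))).mul
    (hasDerivAt_sum_omegaFrameOf_sq_line i β hA hss)).congr_deriv ?_
  have h1n : 1 - (n : ℝ) ≠ 0 := sub_ne_zero.mpr (Ne.symm hn)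
  simp only [zero_smul, add_zero, ← omegaSqOf_eq_sum_sq]
  field_simp
  ring

end Variation

/-- (Lemma 2(a) of the paper.) At a semi-symmetric pair (A,B) with A invertible,
∂H/∂A_{iβ} = (n − 2) det(A) [ 2(n − 2)(Σ_α λ_i^α ω_α) ω^β − (n − 3) λ_i^β ω² ]. -/
theorem sap_lemma2a
    (n : ℕ) (hn : 3 ≤ n)
    (A : Fin n → Fin n → ℝ) (B : Fin n → Fin n → Fin n → ℝ)
    (hA : IsUnit (Matrix.of A).det)
    (hss : ∀ α μ ν, GammaOf (A, B) α μ ν - GammaOf (A, B) α ν μ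
      = (if α = μ then omegaOf (A, B) ν else 0) - (if α = ν then omegaOf (A, B) μ else 0))
    (i β : Fin n) :
    fderiv ℝ (fun p : (Fin n → Fin n → ℝ) × (Fin n → Fin n → Fin n → ℝ) => HOf p)
        (A, B) (fun i' β' => if i' = i ∧ β' = β then (1:ℝ) else 0, 0)
      = ((n : ℝ) - 2) * (Matrix.of A).det *
          (2 * ((n : ℝ) - 2) * (∑ α, lamUp A i α * omegaOf (A, B) α) * omegaUpOf (A, B) β
            - ((n : ℝ) - 3) * lamUp A i β * omegaSqOf (A, B)) := by
  have hn1 : (n : ℝ) ≠ 1 := by exact_mod_cast (show n ≠ 1 by omega)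
  rw [← (differentiableAt_HOf hA).lineDeriv_eq_fderiv]
  exact (hasLineDerivAt_HOf i β hn1 hA hss).lineDeriv
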